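/- arXiv:2101.11140 — 2 statements merged into one kernel-verified Lean document; each statement's English description precedes it below -/
import Mathlib

section
/- Let m ≥ 3, let A be a semi-symmetric strong M-tensor of order m and dimension n, let b ∈ ℝⁿ with b ≥ 0, I₊ = {i : b_i > 0} nonempty, I₀ = {i : b_i = 0}, and suppose for every i ∈ I₀ there exist indices i₂,…,i_m ∈ I₊ with a_{i i₂…i_m} ≠ 0. Let 0 < ε′ < ε < 1. Then for every y ∈ F̄_{ε,ε′}, the Jacobian matrix f'(y) is a nonsingular M-matrix. -/
open Finset Matrix Filter Topology

noncomputable section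

/-- `(A x^{m-1})_i`: action of an `m`th-order `n`-dimensional tensor, stored with its first
index separated and `q = m-1` trailing indices:
`(A x^{m-1})_i = ∑_{i₂,…,i_m} a_{i i₂…i_m} x_{i₂}⋯x_{i_m}`. -/
def tApp {n q : ℕ} (A : Fin n → (Fin q → Fin n) → ℝ) (x : Fin n → ℝ) (i : Fin n) : ℝ :=
  ∑ g : Fin q → Fin n, A i g * ∏ j, x (g j)

/-- Complex version of `tApp` (for eigenvalues). -/
def tAppC {n q : ℕ} (A : Fin n → (Fin q → Fin n) → ℝ) (x : Fin n → ℂ) (i : Fin n) : ℂ :=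
  ∑ g : Fin q → Fin n, (A i g : ℂ) * ∏ j, x (g j)

/-- The identity tensor: entry `1` when all indices coincide, `0` otherwise. -/
def identT (n q : ℕ) : Fin n → (Fin q → Fin n) → ℝ :=
  fun i g => if ∀ j, g j = i then 1 else 0

/-- `lam ∈ ℂ` is an eigenvalue of the tensor `B`: there is a nonzero `x ∈ ℂⁿ` with
`(B x^{m-1})_i = lam * x_i^{m-1}` for all `i`. -/
def IsTensorEigenvalue {n q : ℕ} (B : Fin n → (Fin q → Fin n) → ℝ) (lam : ℂ) : Prop :=
  ∃ x : Fin n → ℂ, x ≠ 0 ∧ ∀ i, tAppC B x i = lam * x i ^ q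

/-- Semi-symmetry: the entries `a_{i i₂…i_m}` are invariant under permutations of `i₂,…,i_m`. -/
def IsSemiSymmetric {n q : ℕ} (A : Fin n → (Fin q → Fin n) → ℝ) : Prop :=
  ∀ (i : Fin n) (g : Fin q → Fin n) (σ : Equiv.Perm (Fin q)), A i (g ∘ σ) = A i g

/-- Z-tensor: all off-diagonal entries are nonpositive. -/
def IsZTensor {n q : ℕ} (A : Fin n → (Fin q → Fin n) → ℝ) : Prop :=
  ∀ (i : Fin n) (g : Fin q → Fin n), ¬(∀ j, g j = i) → A i g ≤ 0

/-- Strong (nonsingular) M-tensor: `A = s·I − B` with `B ≥ 0` and `s > ρ(B)`,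
i.e. `|λ| < s` for every eigenvalue `λ` of `B`. -/
def IsStrongMTensor {n q : ℕ} (A : Fin n → (Fin q → Fin n) → ℝ) : Prop :=
  ∃ (s : ℝ) (B : Fin n → (Fin q → Fin n) → ℝ),
    (∀ i g, 0 ≤ B i g) ∧ (∀ i g, A i g = s * identT n q i g - B i g) ∧
    ∀ lam : ℂ, IsTensorEigenvalue B lam → ‖lam‖ < s

/-- Componentwise power `y^{[α]}`. -/
def cPow {n : ℕ} (y : Fin n → ℝ) (α : ℝ) : Fin n → ℝ := fun i => y i ^ α

/-- Euclidean norm on `Fin n → ℝ`. -/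
def enorm2 {n : ℕ} (x : Fin n → ℝ) : ℝ := Real.sqrt (∑ i, x i ^ 2)

/-- The Jacobian matrix of a map `f : ℝⁿ → ℝⁿ` at `y`. -/
def jacM {n : ℕ} (f : (Fin n → ℝ) → Fin n → ℝ) (y : Fin n → ℝ) :
    Matrix (Fin n) (Fin n) ℝ :=
  fun i j => fderiv ℝ (fun z => f z i) y (Pi.single j 1)

/-- `f(y) = A (y^{[1/(m-1)]})^{m-1} − b`, with `q = m−1`. -/
def fres {n q : ℕ} (A : Fin n → (Fin q → Fin n) → ℝ) (b : Fin n → ℝ)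
    (y : Fin n → ℝ) : Fin n → ℝ :=
  fun i => tApp A (cPow y (1 / (q : ℝ))) i - b i

/-- Nonsingular M-matrix: nonpositive off-diagonal entries and `M = s·1 − N` with
`N ≥ 0` entrywise and `s` larger than the spectral radius of `N`. -/
def IsNonsingularMMatrix {k : Type} [Fintype k] [DecidableEq k] (M : Matrix k k ℝ) : Prop :=
  (∀ i j, i ≠ j → M i j ≤ 0) ∧
  ∃ (s : ℝ) (N : Matrix k k ℝ), (∀ i j, 0 ≤ N i j) ∧
    M = s • (1 : Matrix k k ℝ) - N ∧
    ∀ μ ∈ spectrum ℂ (N.map (fun t : ℝ => (t : ℂ))), ‖μ‖ < s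

/-- The feasible set `F_ε = {y > 0 : A (y^{[1/(m-1)]})^{m-1} ≥ ε b}`. -/
def FSet {n q : ℕ} (A : Fin n → (Fin q → Fin n) → ℝ) (b : Fin n → ℝ) (ε : ℝ) :
    Set (Fin n → ℝ) :=
  {y | (∀ i, 0 < y i) ∧ ∀ i, ε * b i ≤ tApp A (cPow y (1 / (q : ℝ))) i}

/-- Acceptance of the trial steplength `t` in the line search: feasibility and
`‖f(y + t d)‖² ≤ (1 − 2σt)‖f(y)‖²`. -/
def StepOK {n q : ℕ} (A : Fin n → (Fin q → Fin n) → ℝ) (b : Fin n → ℝ)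
    (Fb : Set (Fin n → ℝ)) (σ : ℝ) (y d : Fin n → ℝ) (t : ℝ) : Prop :=
  y + t • d ∈ Fb ∧
    enorm2 (fres A b (y + t • d)) ^ 2 ≤ (1 - 2 * σ * t) * enorm2 (fres A b y) ^ 2

/-- Newton's method (Algorithm 2.4 resp. 3.4) with feasible set `Fb`, never terminating:
`y₀ ∈ Fb`; for every `k`, `f(y_k) ≠ 0`, `d_k` is the unique solution of
`f'(y_k) d = −f(y_k)`, `α_k = ρ^{i_k}` with `i_k` the least acceptable exponent, and
`y_{k+1} = y_k + α_k d_k`. -/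
def NewtonIter {n q : ℕ} (A : Fin n → (Fin q → Fin n) → ℝ) (b : Fin n → ℝ)
    (Fb : Set (Fin n → ℝ)) (σ ρ : ℝ) (y d : ℕ → Fin n → ℝ) (α : ℕ → ℝ) : Prop :=
  y 0 ∈ Fb ∧ ∀ k : ℕ,
    fres A b (y k) ≠ 0 ∧
    jacM (fres A b) (y k) *ᵥ d k = -fres A b (y k) ∧
    (∀ d', jacM (fres A b) (y k) *ᵥ d' = -fres A b (y k) → d' = d k) ∧
    (∃ ik : ℕ, α k = ρ ^ ik ∧ StepOK A b Fb σ (y k) (d k) (ρ ^ ik) ∧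
      ∀ i < ik, ¬StepOK A b Fb σ (y k) (d k) (ρ ^ i)) ∧
    y (k + 1) = y k + α k • d k

/-- Submatrix of `M` with rows indexed by `{i // P i}` and columns by `{i // Q i}`. -/
def subMat {n : ℕ} (M : Matrix (Fin n) (Fin n) ℝ) (P Q : Fin n → Prop) :
    Matrix {i // P i} {i // Q i} ℝ :=
  fun i j => M i.1 j.1

/-- `b` restricted to the index set `I₊ = {i : b_i > 0}`. -/
def bPlus {n : ℕ} (b : Fin n → ℝ) : {i : Fin n // 0 < b i} → ℝ := fun i => b i.1

/-- `F̄¹_ε = {y > 0 : (A(y^{[1/(m−1)]})^{m−1})_i ≥ ε b_i for all i ∈ I₊}`. -/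
def FBar1 {n q : ℕ} (A : Fin n → (Fin q → Fin n) → ℝ) (b : Fin n → ℝ) (ε : ℝ) :
    Set (Fin n → ℝ) :=
  {y | (∀ i, 0 < y i) ∧ ∀ i, 0 < b i → ε * b i ≤ tApp A (cPow y (1 / (q : ℝ))) i}

/-- `F̄²_{ε'} = {y > 0 : f'(y)_{I₊I₊} invertible and
`(A(y^{[1/(m−1)]})^{m−1})_{I₀} ≥ ε' f'(y)_{I₀I₊} f'(y)_{I₊I₊}⁻¹ b_{I₊}` componentwise}. -/
def FBar2 {n q : ℕ} (A : Fin n → (Fin q → Fin n) → ℝ) (b : Fin n → ℝ) (ε' : ℝ) :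
    Set (Fin n → ℝ) :=
  {y | (∀ i, 0 < y i) ∧
    IsUnit (subMat (jacM (fres A b) y) (fun i => 0 < b i) (fun i => 0 < b i)) ∧
    ∀ i : {i : Fin n // b i = 0},
      ε' * (subMat (jacM (fres A b) y) (fun i => b i = 0) (fun i => 0 < b i) *ᵥ
        ((subMat (jacM (fres A b) y) (fun i => 0 < b i) (fun i => 0 < b i))⁻¹ *ᵥ bPlus b)) i
        ≤ tApp A (cPow y (1 / (q : ℝ))) i.1}

/-- `F̄_{ε,ε'} = F̄¹_ε ∩ F̄²_{ε'}`. -/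
def FBar {n q : ℕ} (A : Fin n → (Fin q → Fin n) → ℝ) (b : Fin n → ℝ) (ε ε' : ℝ) :
    Set (Fin n → ℝ) :=
  FBar1 A b ε ∩ FBar2 A b ε'

/-- For every `i ∈ I₀` there exist indices `i₂,…,i_m ∈ I₊` with `a_{i i₂…i_m} ≠ 0`. -/
def I0Hyp {n q : ℕ} (A : Fin n → (Fin q → Fin n) → ℝ) (b : Fin n → ℝ) : Prop :=
  ∀ i : Fin n, b i = 0 → ∃ g : Fin q → Fin n, (∀ j, 0 < b (g j)) ∧ A i g ≠ 0

/-! The Jacobian `J = f'(y)` is a Z-matrix (`A` is a Z-tensor and the partial derivatives of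
the monomials `∏ₗ y_{g l} ^ (1/(m-1))` are nonnegative) and satisfies Euler's identity
`J y = A (y^{[1/(m-1)]})^{m-1}`. A Z-matrix `J` with `J x > 0` for some `x > 0` is a nonsingular
M-matrix: writing `J = s·1 - N` with `N ≥ 0`, `N x < s x` bounds the spectral radius of `N`
by `s`. Such an `x` comes from `u = y - ε' J_{I₊I₊}⁻¹ b_{I₊}` on `I₊`, `u = y` on `I₀`.
The two conditions defining `F̄_{ε,ε'}` give `J u ≥ 0` with strict inequality on `I₊`, and `u > 0`
by the minimum principle for the Z-matrix `J_{I₊I₊}`. Shrinking `u` slightly on `I₊` then makes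
the rows of `I₀` strictly positive as well, as each of them has a negative entry in a column of
`I₊`. -/

def IsZMatrix {k : Type*} (M : Matrix k k ℝ) : Prop :=
  ∀ i j, i ≠ j → M i j ≤ 0

namespace IsZMatrix

variable {k : Type*} {M : Matrix k k ℝ}

lemma mul_nonpos_of_eq_zero (hM : IsZMatrix M) {w : k → ℝ} (hw : ∀ j, 0 ≤ w j) {i : k}
    (hi : w i = 0) (j : k) : M i j * w j ≤ 0 := by
  rcases eq_or_ne i j with rfl | hij
  · simp [hi]
  · exact mul_nonpos_of_nonpos_of_nonneg (hM i j hij) (hw j)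

variable [Fintype k]

lemma mulVec_apply_nonpos (hM : IsZMatrix M) {w : k → ℝ} (hw : ∀ j, 0 ≤ w j) {i : k}
    (hi : w i = 0) : (M *ᵥ w) i ≤ 0 :=
  sum_nonpos fun j _ => hM.mul_nonpos_of_eq_zero hw hi j

lemma mulVec_apply_neg (hM : IsZMatrix M) {w : k → ℝ} (hw : ∀ j, 0 ≤ w j) {i j : k}
    (hi : w i = 0) (hij : M i j < 0) (hj : 0 < w j) : (M *ᵥ w) i < 0 := by
  have := sum_lt_sum (s := univ) (g := fun _ => (0 : ℝ))
    (fun j _ => hM.mul_nonpos_of_eq_zero hw hi j) ⟨j, mem_univ j, mul_neg_of_neg_of_pos hij hj⟩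
  simpa [mulVec, dotProduct] using this

lemma pos_of_mulVec_pos (hM : IsZMatrix M) {z v : k → ℝ} (hz : ∀ i, 0 < z i)
    (hMz : ∀ i, 0 ≤ (M *ᵥ z) i) (hMv : ∀ i, 0 < (M *ᵥ v) i) (i : k) : 0 < v i := by
  obtain ⟨i₀, -, hmin⟩ := exists_min_image univ (fun j => v j / z j) ⟨i, mem_univ i⟩
  set t := v i₀ / z i₀
  have hle : ∀ j, t * z j ≤ v j := fun j => (le_div_iff₀ (hz j)).1 (hmin j (mem_univ j))
  have hzero : (v - t • z) i₀ = 0 := by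
    simp [t, div_mul_cancel₀ _ (hz i₀).ne']
  have hdiff := hM.mulVec_apply_nonpos (w := v - t • z) (fun j => by simpa using hle j) hzero
  rw [mulVec_sub, mulVec_smul, Pi.sub_apply, Pi.smul_apply, smul_eq_mul] at hdiff
  have ht : 0 < t := by
    by_contra! ht
    nlinarith [hMv i₀, hMz i₀]
  exact lt_of_lt_of_le (mul_pos ht (hz i)) (hle i)

lemma mulVec_apply_le_sum_subtype (hM : IsZMatrix M) (P : k → Prop) [DecidablePred P]
    {y : k → ℝ} (hy : ∀ j, 0 ≤ y j) {i : k} (hi : P i) :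
    (M *ᵥ y) i ≤ ∑ j : {j // P j}, M i j * y j := by
  rw [mulVec, dotProduct, ← Fintype.sum_subtype_add_sum_subtype P]
  have hrest : ∑ j : {j // ¬P j}, M i j * y j ≤ 0 :=
    sum_nonpos fun j _ => mul_nonpos_of_nonpos_of_nonneg (hM i j fun h => j.2 (h ▸ hi)) (hy j)
  linarith

end IsZMatrix

lemma norm_lt_of_mem_spectrum_of_mulVec_lt {k : Type*} [Fintype k] [DecidableEq k]
    {N : Matrix k k ℝ} {s : ℝ} {x : k → ℝ} (hN : ∀ i j, 0 ≤ N i j) (hx : ∀ i, 0 < x i)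
    (hNx : ∀ i, (N *ᵥ x) i < s * x i) {μ : ℂ}
    (hμ : μ ∈ spectrum ℂ (N.map (fun t : ℝ => (t : ℂ)))) : ‖μ‖ < s := by
  rw [← Matrix.spectrum_toLin', ← Module.End.hasEigenvalue_iff_mem_spectrum] at hμ
  obtain ⟨v, hv⟩ := hμ.exists_hasEigenvector
  have heig : N.map (fun t : ℝ => (t : ℂ)) *ᵥ v = μ • v := by
    rw [← Matrix.toLin'_apply]; exact hv.apply_eq_smul
  obtain ⟨j₀, hj₀⟩ := Function.ne_iff.1 hv.right
  obtain ⟨i₀, -, hmax⟩ := exists_max_image univ (fun j => ‖v j‖ / x j) ⟨j₀, mem_univ j₀⟩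
  set r := ‖v i₀‖ / x i₀
  have hle : ∀ j, ‖v j‖ ≤ r * x j := fun j => (div_le_iff₀ (hx j)).1 (hmax j (mem_univ j))
  have hr : 0 < r :=
    lt_of_lt_of_le (div_pos (norm_pos_iff.2 hj₀) (hx j₀)) (hmax j₀ (mem_univ j₀))
  have hvi₀ : ‖v i₀‖ = r * x i₀ := by simp [r, div_mul_cancel₀ _ (hx i₀).ne']
  have hchain : ‖μ‖ * ‖v i₀‖ < s * ‖v i₀‖ :=
    calc ‖μ‖ * ‖v i₀‖ = ‖(N.map (fun t : ℝ => (t : ℂ)) *ᵥ v) i₀‖ := by simp [heig]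
      _ ≤ ∑ j, N i₀ j * ‖v j‖ := by
        refine (norm_sum_le _ _).trans (le_of_eq (sum_congr rfl fun j _ => ?_))
        simp [abs_of_nonneg (hN i₀ j)]
      _ ≤ ∑ j, N i₀ j * (r * x j) :=
        sum_le_sum fun j _ => mul_le_mul_of_nonneg_left (hle j) (hN i₀ j)
      _ = r * (N *ᵥ x) i₀ := by
        rw [mulVec, dotProduct, mul_sum]; exact sum_congr rfl fun j _ => by ring
      _ < r * (s * x i₀) := mul_lt_mul_of_pos_left (hNx i₀) hr
      _ = s * ‖v i₀‖ := by rw [hvi₀]; ring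
  exact lt_of_mul_lt_mul_right hchain (norm_nonneg _)

lemma IsZMatrix.isNonsingularMMatrix {k : Type} [Fintype k] [DecidableEq k]
    {M : Matrix k k ℝ} (hM : IsZMatrix M) {x : k → ℝ} (hx : ∀ i, 0 < x i)
    (hMx : ∀ i, 0 < (M *ᵥ x) i) : IsNonsingularMMatrix M := by
  set s := ∑ i, |M i i|
  have hdiag : ∀ i, M i i ≤ s := fun i =>
    (le_abs_self _).trans (single_le_sum (f := fun i => |M i i|) (fun _ _ => abs_nonneg _)
      (mem_univ i))
  have hN : ∀ i j, 0 ≤ (s • 1 - M) i j := by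
    intro i j
    rcases eq_or_ne i j with rfl | hij
    · simpa using hdiag i
    · simpa [hij] using hM i j hij
  exact ⟨hM, s, s • 1 - M, hN, (sub_sub_cancel _ _).symm, fun μ hμ =>
    norm_lt_of_mem_spectrum_of_mulVec_lt hN hx
      (fun i => by simpa [sub_mulVec, smul_mulVec] using hMx i) hμ⟩

lemma IsZMatrix.exists_pos_mulVec_pos {k : Type*} [Fintype k] {M : Matrix k k ℝ}
    (hM : IsZMatrix M) (P : k → Prop) [DecidablePred P] {u : k → ℝ} (hu : ∀ i, 0 < u i)
    (hMu : ∀ i, 0 ≤ (M *ᵥ u) i) (hP : ∀ i, P i → 0 < (M *ᵥ u) i)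
    (hnP : ∀ i, ¬P i → ∃ j, P j ∧ M i j < 0) :
    ∃ x : k → ℝ, (∀ i, 0 < x i) ∧ ∀ i, 0 < (M *ᵥ x) i := by
  set uP : k → ℝ := fun j => if P j then u j else 0
  have huP : ∀ j, 0 ≤ uP j := fun j => by by_cases hj : P j <;> simp [uP, hj, (hu j).le]
  have hsmall : ∀ᶠ β in 𝓝 (0 : ℝ),
      β < 1 ∧ ∀ i : {i // P i}, 0 < (M *ᵥ u) i - β * (M *ᵥ uP) i := by
    refine (eventually_lt_nhds one_pos).and (eventually_all.2 fun i => ?_)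
    have hcont : Continuous fun β : ℝ => (M *ᵥ u) i - β * (M *ᵥ uP) i := by fun_prop
    exact (hcont.tendsto' 0 _ (by simp)).eventually_const_lt (hP i i.2)
  obtain ⟨β, ⟨hβ1, hβP⟩, hβ0⟩ :=
    ((hsmall.filter_mono nhdsWithin_le_nhds).and self_mem_nhdsWithin).exists (f := 𝓝[>] 0)
  refine ⟨u - β • uP, fun j => ?_, fun i => ?_⟩
  · by_cases hj : P j
    · simpa [uP, hj, sub_pos, ← one_sub_mul] using mul_pos (sub_pos.2 hβ1) (hu j)
    · simpa [uP, hj] using hu j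
  · rw [mulVec_sub, mulVec_smul, Pi.sub_apply, Pi.smul_apply, smul_eq_mul]
    by_cases hi : P i
    · exact hβP ⟨i, hi⟩
    · obtain ⟨j, hj, hij⟩ := hnP i hi
      have hneg := hM.mulVec_apply_neg huP (by simp [uP, hi]) hij (by simpa [uP, hj] using hu j)
      nlinarith [hMu i]

lemma mulVec_dite_apply {k : Type*} [Fintype k] (M : Matrix k k ℝ) (P : k → Prop)
    [DecidablePred P] (w : {i // P i} → ℝ) (i : k) :
    (M *ᵥ fun j => if h : P j then w ⟨j, h⟩ else 0) i = ∑ j : {j // P j}, M i j * w j := by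
  rw [mulVec, dotProduct, ← Fintype.sum_subtype_add_sum_subtype P]
  have hout : ∑ j : {j // ¬P j}, M i j * (if h : P j then w ⟨j, h⟩ else 0) = 0 :=
    Fintype.sum_eq_zero _ fun j => by simp [j.2]
  rw [hout, add_zero]
  exact Fintype.sum_congr _ _ fun j => by simp [j.2]

lemma exists_pos_mulVec_nonneg_of_blocks {n : ℕ} {J : Matrix (Fin n) (Fin n) ℝ}
    (hJ : IsZMatrix J) {b y : Fin n → ℝ} (hb : ∀ i, 0 ≤ b i) (hy : ∀ i, 0 < y i) {ε ε' : ℝ}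
    (hε' : 0 < ε') (hεε' : ε' < ε) (hplus : ∀ i, 0 < b i → ε * b i ≤ (J *ᵥ y) i)
    (hunit : IsUnit (subMat J (fun i => 0 < b i) (fun i => 0 < b i)))
    (hzero : ∀ i : {i // b i = 0},
      ε' * (subMat J (fun i => b i = 0) (fun i => 0 < b i) *ᵥ
        ((subMat J (fun i => 0 < b i) (fun i => 0 < b i))⁻¹ *ᵥ bPlus b)) i ≤ (J *ᵥ y) i) :
    ∃ u : Fin n → ℝ, (∀ i, 0 < u i) ∧ (∀ i, 0 ≤ (J *ᵥ u) i) ∧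
      ∀ i, 0 < b i → 0 < (J *ᵥ u) i := by
  set Jpp := subMat J (fun i => 0 < b i) (fun i => 0 < b i)
  set w := Jpp⁻¹ *ᵥ bPlus b
  have hw : Jpp *ᵥ w = bPlus b := by
    rw [mulVec_mulVec, mul_nonsing_inv _ ((isUnit_iff_isUnit_det _).1 hunit), one_mulVec]
  have hJpp : IsZMatrix Jpp := fun i j hij => hJ i j fun h => hij (Subtype.ext h)
  set yP : {i // 0 < b i} → ℝ := fun j => y j
  have hJyP : ∀ i : {i // 0 < b i}, ε * b i ≤ (Jpp *ᵥ yP) i := fun i =>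
    (hplus i i.2).trans (hJ.mulVec_apply_le_sum_subtype (fun j => 0 < b j) (fun j => (hy j).le) i.2)
  have hJuP : ∀ i, 0 < (Jpp *ᵥ (yP - ε' • w)) i := fun i => by
    rw [mulVec_sub, mulVec_smul, hw]
    simpa [bPlus] using lt_of_lt_of_le (mul_lt_mul_of_pos_right hεε' i.2) (hJyP i)
  have huP : ∀ j, 0 < yP j - ε' * w j := fun j => by
    simpa using hJpp.pos_of_mulVec_pos (fun j => hy j)
      (fun i => (mul_pos (hε'.trans hεε') i.2).le.trans (hJyP i)) hJuP j
  set v : Fin n → ℝ := fun j => if h : 0 < b j then w ⟨j, h⟩ else 0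
  have hJu : ∀ i, (J *ᵥ (y - ε' • v)) i = (J *ᵥ y) i - ε' * ∑ j : {j // 0 < b j}, J i j * w j :=
    fun i => by rw [mulVec_sub, mulVec_smul, Pi.sub_apply, Pi.smul_apply, smul_eq_mul,
      mulVec_dite_apply]
  have hpos : ∀ i, 0 < b i → 0 < (J *ᵥ (y - ε' • v)) i := by
    intro i hi
    have hbi : ∑ j : {j // 0 < b j}, J i j * w j = b i := congrFun hw ⟨i, hi⟩
    rw [hJu, hbi]
    nlinarith [hplus i hi]
  refine ⟨y - ε' • v, fun j => ?_, fun i => ?_, hpos⟩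
  · by_cases hj : 0 < b j
    · simpa [v, hj] using huP ⟨j, hj⟩
    · simpa [v, hj] using hy j
  · rcases (hb i).lt_or_eq with hi | hi
    · exact (hpos i hi).le
    · rw [hJu]
      exact sub_nonneg.2 (hzero ⟨i, hi.symm⟩)

/-- The partial derivative `∂/∂y_j` of the monomial `∏ₗ y_{g l} ^ r`. -/
def rpowMonomialDeriv {ι : Type*} [DecidableEq ι] {q : ℕ} (r : ℝ) (y : ι → ℝ)
    (g : Fin q → ι) (j : ι) : ℝ :=
  ∑ k, if g k = j then (∏ l ∈ univ.erase k, y (g l) ^ r) * (r * y (g k) ^ (r - 1)) else 0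

section Monomial

variable {ι : Type*} {q : ℕ} {r : ℝ} {y : ι → ℝ}

lemma hasFDerivAt_prod_rpow [Fintype ι] (g : Fin q → ι) (hy : ∀ i, 0 < y i) :
    HasFDerivAt (fun z : ι → ℝ => ∏ l, z (g l) ^ r)
      (∑ k, (∏ l ∈ univ.erase k, y (g l) ^ r) •
        (r * y (g k) ^ (r - 1)) • ContinuousLinearMap.proj (R := ℝ) (φ := fun _ : ι => ℝ) (g k))
      y :=
  HasFDerivAt.finsetProd fun k _ =>
    (ContinuousLinearMap.proj (R := ℝ) (φ := fun _ : ι => ℝ) (g k)).hasFDerivAt.rpow_const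
      (x := y) (Or.inl (hy (g k)).ne')

lemma prod_erase_rpow_mul_nonneg (hy : ∀ i, 0 < y i) (hr : 0 ≤ r) (g : Fin q → ι)
    (k : Fin q) : 0 ≤ (∏ l ∈ univ.erase k, y (g l) ^ r) * (r * y (g k) ^ (r - 1)) :=
  mul_nonneg (prod_nonneg fun _ _ => (Real.rpow_pos_of_pos (hy _) _).le)
    (mul_nonneg hr (Real.rpow_pos_of_pos (hy _) _).le)

variable [DecidableEq ι]

lemma rpowMonomialDeriv_nonneg (hy : ∀ i, 0 < y i) (hr : 0 ≤ r) (g : Fin q → ι) (j : ι) :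
    0 ≤ rpowMonomialDeriv r y g j :=
  sum_nonneg fun k _ => by
    split_ifs
    exacts [prod_erase_rpow_mul_nonneg hy hr g k, le_rfl]

lemma rpowMonomialDeriv_pos (hy : ∀ i, 0 < y i) (hr : 0 < r) (g : Fin q → ι) (k : Fin q) :
    0 < rpowMonomialDeriv r y g (g k) := by
  refine sum_pos' (fun l _ => ?_) ⟨k, mem_univ k, ?_⟩
  · split_ifs
    exacts [prod_erase_rpow_mul_nonneg hy hr.le g l, le_rfl]
  · rw [if_pos rfl]
    exact mul_pos (prod_pos fun l _ => Real.rpow_pos_of_pos (hy _) _)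
      (mul_pos hr (Real.rpow_pos_of_pos (hy _) _))

lemma rpowMonomialDeriv_eq_zero {g : Fin q → ι} {j : ι} (hj : ∀ k, g k ≠ j) :
    rpowMonomialDeriv r y g j = 0 :=
  sum_eq_zero fun k _ => if_neg (hj k)

lemma sum_rpowMonomialDeriv_mul [Fintype ι] (hy : ∀ i, 0 < y i) (g : Fin q → ι) :
    ∑ j, rpowMonomialDeriv r y g j * y j = q * r * ∏ l, y (g l) ^ r := by
  have hterm : ∀ k, (∏ l ∈ univ.erase k, y (g l) ^ r) * (r * y (g k) ^ (r - 1)) * y (g k)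
      = r * ∏ l, y (g l) ^ r := fun k => by
    rw [← mul_prod_erase univ (fun l => y (g l) ^ r) (mem_univ k),
      Real.rpow_sub_one (hy (g k)).ne']
    field_simp [(hy (g k)).ne']
  simp only [rpowMonomialDeriv, sum_mul, ite_mul, zero_mul]
  rw [sum_comm]
  simp only [sum_ite_eq, mem_univ, if_true, hterm, sum_const, card_univ, Fintype.card_fin,
    nsmul_eq_mul]
  ring

end Monomial

section Jacobian

variable {n q : ℕ} {A : Fin n → (Fin q → Fin n) → ℝ} {y : Fin n → ℝ}

lemma jacM_fres_apply (b : Fin n → ℝ) (hy : ∀ i, 0 < y i) (i j : Fin n) :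
    jacM (fres A b) y i j = ∑ g, A i g * rpowMonomialDeriv (1 / q) y g j := by
  have hF : HasFDerivAt (fun z => fres A b z i)
      (∑ g, A i g • ∑ k, (∏ l ∈ univ.erase k, y (g l) ^ (1 / q : ℝ)) •
        ((1 / q : ℝ) * y (g k) ^ ((1 / q : ℝ) - 1)) •
          ContinuousLinearMap.proj (R := ℝ) (φ := fun _ : Fin n => ℝ) (g k)) y :=
    (HasFDerivAt.fun_sum fun g _ => (hasFDerivAt_prod_rpow g hy).const_mul (A i g)).sub_const
      (b i)
  rw [jacM, hF.fderiv]
  simp [rpowMonomialDeriv, Pi.single_apply, mul_comm, mul_left_comm]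

lemma jacM_fres_mulVec_self (b : Fin n → ℝ) (hq : q ≠ 0) (hy : ∀ i, 0 < y i) :
    jacM (fres A b) y *ᵥ y = tApp A (cPow y (1 / q)) := by
  ext i
  simp only [mulVec, dotProduct, jacM_fres_apply b hy, sum_mul, mul_assoc]
  rw [sum_comm]
  simp only [← mul_sum, sum_rpowMonomialDeriv_mul hy]
  simp [tApp, cPow, hq]

lemma IsStrongMTensor.isZTensor (hA : IsStrongMTensor A) : IsZTensor A := by
  obtain ⟨s, B, hB, hAB, -⟩ := hA
  intro i g hg
  simpa [hAB, identT, hg] using hB i g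

namespace IsZTensor

lemma mul_rpowMonomialDeriv_nonpos (hA : IsZTensor A) (hy : ∀ i, 0 < y i) {r : ℝ} (hr : 0 ≤ r)
    (g : Fin q → Fin n) {i j : Fin n} (hij : i ≠ j) : A i g * rpowMonomialDeriv r y g j ≤ 0 := by
  by_cases hg : ∀ l, g l = i
  · simp [rpowMonomialDeriv_eq_zero fun k => (hg k).trans_ne hij]
  · exact mul_nonpos_of_nonpos_of_nonneg (hA i g hg) (rpowMonomialDeriv_nonneg hy hr g j)

lemma isZMatrix_jacM_fres (hA : IsZTensor A) (b : Fin n → ℝ) (hy : ∀ i, 0 < y i) :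
    IsZMatrix (jacM (fres A b) y) := fun i j hij => by
  rw [jacM_fres_apply b hy]
  exact sum_nonpos fun g _ => hA.mul_rpowMonomialDeriv_nonpos hy (r := 1 / q) (by positivity) g hij

lemma jacM_fres_apply_neg (hA : IsZTensor A) (b : Fin n → ℝ) (hy : ∀ i, 0 < y i) {i : Fin n}
    {g : Fin q → Fin n} (hAg : A i g ≠ 0) (k : Fin q) (hk : i ≠ g k) :
    jacM (fres A b) y i (g k) < 0 := by
  have hq : (0 : ℝ) < 1 / q := one_div_pos.2 (Nat.cast_pos.2 (Fin.pos k))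
  have hAg' : A i g < 0 := (hA i g fun h => hk (h k).symm).lt_of_ne hAg
  rw [jacM_fres_apply b hy]
  have := sum_lt_sum (s := univ) (g := fun _ => (0 : ℝ))
    (fun g' _ => hA.mul_rpowMonomialDeriv_nonpos hy hq.le g' hk)
    ⟨g, mem_univ g, mul_neg_of_neg_of_pos hAg' (rpowMonomialDeriv_pos hy hq g k)⟩
  simpa using this

end IsZTensor

end Jacobian

theorem jacobian_nonsingular_M_on_FBar_general {m n : ℕ} (hm : 3 ≤ m)
    (A : Fin n → (Fin (m - 1) → Fin n) → ℝ)
    (hM : IsStrongMTensor A)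
    (b : Fin n → ℝ) (hb : ∀ i, 0 ≤ b i) (hI0 : I0Hyp A b)
    (ε ε' : ℝ) (h1 : 0 < ε') (h2 : ε' < ε) :
    ∀ y ∈ FBar A b ε ε', IsNonsingularMMatrix (jacM (fres A b) y) := by
  rintro y ⟨⟨hy, hplus⟩, -, hunit, hzero⟩
  have hA := hM.isZTensor
  have hJ := hA.isZMatrix_jacM_fres b hy
  have hEuler := jacM_fres_mulVec_self (A := A) b (show m - 1 ≠ 0 by omega) hy
  rw [← hEuler] at hplus hzero
  obtain ⟨u, hu, hJu, hJuP⟩ :=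
    exists_pos_mulVec_nonneg_of_blocks hJ hb hy h1 h2 hplus hunit hzero
  have hlink : ∀ i, ¬0 < b i → ∃ j, 0 < b j ∧ jacM (fres A b) y i j < 0 := by
    intro i hi
    obtain ⟨g, hg, hAg⟩ := hI0 i (le_antisymm (not_lt.1 hi) (hb i))
    let k : Fin (m - 1) := ⟨0, by omega⟩
    exact ⟨g k, hg k, hA.jacM_fres_apply_neg b hy hAg k fun h => hi (h ▸ hg k)⟩
  obtain ⟨x, hx, hJx⟩ := hJ.exists_pos_mulVec_pos (fun i => 0 < b i) hu hJu hJuP hlink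
  exact hJ.isNonsingularMMatrix hx hJx

theorem jacobian_nonsingular_M_on_FBar {m n : ℕ} (hm : 3 ≤ m)
    (A : Fin n → (Fin (m - 1) → Fin n) → ℝ)
    (hsym : IsSemiSymmetric A) (hM : IsStrongMTensor A)
    (b : Fin n → ℝ) (hb : ∀ i, 0 ≤ b i) (hbp : ∃ i, 0 < b i) (hI0 : I0Hyp A b)
    (ε ε' : ℝ) (h1 : 0 < ε') (h2 : ε' < ε) (h3 : ε < 1) :
    ∀ y ∈ FBar A b ε ε', IsNonsingularMMatrix (jacM (fres A b) y) :=
  jacobian_nonsingular_M_on_FBar_general hm A hM b hb hI0 ε ε' h1 h2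
end
end

section
/- Let m ≥ 2, let A be an mth-order n-dimensional strong M-tensor, and let b ∈ ℝⁿ. Then for every β ∈ ℝ, the level set Ω_β = {x ∈ ℝⁿ : ‖A x^{m−1} − b‖ ≤ β} is bounded, where ‖·‖ is the Euclidean norm. -/
open Finset Matrix Filter Topology

noncomputable section

/-!
The map `F x = A x^{m-1}` is continuous and homogeneous of degree `m - 1 ≥ 1`, and it vanishes
only at `0`: a nonzero real zero of `A = s I - B` is an eigenvector of `B` for the eigenvalue `s`,
contradicting `ρ(B) < s`. Hence `‖F x‖ ≥ c ‖x‖^{m-1}` with `c > 0` the minimum of `‖F‖` on the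
unit sphere, and `‖F x - b‖ ≤ β` forces `c ‖x‖^{m-1} ≤ β + ‖b‖`.
-/

section Homogeneous

variable {E G : Type*} [NormedAddCommGroup E] [NormedSpace ℝ E] [FiniteDimensional ℝ E]
  [NormedAddCommGroup G] [NormedSpace ℝ G] {F : E → G} {q : ℕ}

theorem exists_pos_forall_mul_norm_pow_le (hFc : Continuous F)
    (hF : ∀ (r : ℝ) x, 0 < r → F (r • x) = r ^ q • F x) (hF0 : ∀ x, F x = 0 → x = 0) :
    ∃ c > 0, ∀ x ≠ 0, c * ‖x‖ ^ q ≤ ‖F x‖ := by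
  obtain ⟨c, hc, hcF⟩ := (isCompact_sphere (0 : E) 1).exists_forall_le'
    (continuous_norm.comp hFc).continuousOn (a := 0) fun u hu => by
      refine norm_pos_iff.2 fun h => ?_
      simp [hF0 u h] at hu
  refine ⟨c, hc, fun x hx => ?_⟩
  have hx' : 0 < ‖x‖ := norm_pos_iff.2 hx
  have hu : ‖x‖⁻¹ • x ∈ Metric.sphere (0 : E) 1 := by
    simp [norm_smul, hx'.ne']
  calc c * ‖x‖ ^ q ≤ ‖F (‖x‖⁻¹ • x)‖ * ‖x‖ ^ q := by gcongr; exact hcF _ hu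
    _ = ‖F x‖ := by
      conv_rhs => rw [← smul_inv_smul₀ hx'.ne' x, hF _ _ hx', norm_smul]
      simp [mul_comm]

theorem exists_bound_of_norm_sub_le (hFc : Continuous F)
    (hF : ∀ (r : ℝ) x, 0 < r → F (r • x) = r ^ q • F x) (hF0 : ∀ x, F x = 0 → x = 0)
    (hq : q ≠ 0) (b : G) (β : ℝ) :
    ∃ C, ∀ x, ‖F x - b‖ ≤ β → ‖x‖ ≤ C := by
  obtain ⟨c, hc, hcF⟩ := exists_pos_forall_mul_norm_pow_le hFc hF hF0
  refine ⟨max 1 ((β + ‖b‖) / c), fun x hx => ?_⟩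
  rcases le_or_gt ‖x‖ 1 with hx1 | hx1
  · exact hx1.trans (le_max_left _ _)
  have hx0 : x ≠ 0 := norm_pos_iff.1 (zero_lt_one.trans hx1)
  refine le_max_of_le_right ((le_div_iff₀' hc).2 ?_)
  calc c * ‖x‖ ≤ c * ‖x‖ ^ q := by gcongr; exact le_self_pow₀ hx1.le hq
    _ ≤ ‖F x‖ := hcF x hx0
    _ ≤ ‖F x - b‖ + ‖b‖ := norm_le_norm_sub_add _ _
    _ ≤ β + ‖b‖ := by linarith

end Homogeneous

section Tensor

variable {n q : ℕ}

theorem tApp_smul (A : Fin n → (Fin q → Fin n) → ℝ) (r : ℝ) (x : Fin n → ℝ) (i : Fin n) :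
    tApp A (r • x) i = r ^ q * tApp A x i := by
  simp only [tApp, Pi.smul_apply, smul_eq_mul, Finset.prod_mul_distrib, Finset.prod_const,
    Finset.card_univ, Fintype.card_fin, Finset.mul_sum]
  exact Finset.sum_congr rfl fun g _ => by ring

theorem continuous_tApp (A : Fin n → (Fin q → Fin n) → ℝ) (i : Fin n) :
    Continuous fun x => tApp A x i := by
  unfold tApp
  fun_prop

theorem tApp_identT (x : Fin n → ℝ) (i : Fin n) : tApp (identT n q) x i = x i ^ q := by
  rw [tApp, Finset.sum_eq_single (fun _ => i)]
  · simp [identT]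
  · intro g _ hg
    rw [identT, if_neg fun h => hg (funext h), zero_mul]
  · simp

theorem tApp_smul_identT_sub (s : ℝ) (B : Fin n → (Fin q → Fin n) → ℝ) (x : Fin n → ℝ)
    (i : Fin n) : tApp (fun i g => s * identT n q i g - B i g) x i = s * x i ^ q - tApp B x i := by
  rw [← tApp_identT (q := q)]
  simp only [tApp, sub_mul, Finset.sum_sub_distrib, Finset.mul_sum, mul_assoc]

theorem tAppC_ofReal (B : Fin n → (Fin q → Fin n) → ℝ) (x : Fin n → ℝ) (i : Fin n) :
    tAppC B (fun i => (x i : ℂ)) i = tApp B x i := by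
  simp [tAppC, tApp]

theorem IsStrongMTensor.eq_zero_of_tApp_eq_zero {A : Fin n → (Fin q → Fin n) → ℝ}
    (hA : IsStrongMTensor A) {x : Fin n → ℝ} (hx : ∀ i, tApp A x i = 0) : x = 0 := by
  obtain ⟨s, B, -, hAB, hspec⟩ := hA
  obtain rfl : A = fun i g => s * identT n q i g - B i g := funext₂ hAB
  by_contra hx0
  have heig : IsTensorEigenvalue B (s : ℂ) := by
    refine ⟨fun i => (x i : ℂ), fun h => hx0 (funext fun i => by simpa using congrFun h i),
      fun i => ?_⟩
    have := hx i
    rw [tApp_smul_identT_sub] at this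
    rw [tAppC_ofReal]
    show _ = (s : ℂ) * (x i : ℂ) ^ q
    exact_mod_cast (sub_eq_zero.1 this).symm
  have := hspec _ heig
  rw [Complex.norm_real, Real.norm_eq_abs] at this
  exact (le_abs_self s).not_gt this

end Tensor

theorem enorm2_eq_norm_toLp {n : ℕ} (x : Fin n → ℝ) :
    enorm2 x = ‖(WithLp.toLp 2 x : EuclideanSpace ℝ (Fin n))‖ := by
  simp [enorm2, EuclideanSpace.norm_eq]

theorem level_set_bounded {m n : ℕ} (hm : 2 ≤ m)
    (A : Fin n → (Fin (m - 1) → Fin n) → ℝ) (hM : IsStrongMTensor A)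
    (b : Fin n → ℝ) :
    ∀ β : ℝ, ∃ C : ℝ, ∀ x : Fin n → ℝ,
      enorm2 (fun i => tApp A x i - b i) ≤ β → enorm2 x ≤ C := by
  intro β
  let F : EuclideanSpace ℝ (Fin n) → EuclideanSpace ℝ (Fin n) :=
    fun x => WithLp.toLp 2 fun i => tApp A x.ofLp i
  have hFc : Continuous F := (PiLp.continuous_toLp _ _).comp <|
    continuous_pi fun i => (continuous_tApp A i).comp (PiLp.continuous_ofLp _ _)
  have hF : ∀ (r : ℝ) x, 0 < r → F (r • x) = r ^ (m - 1) • F x := fun r x _ => by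
    ext i
    simp [F, tApp_smul]
  have hF0 : ∀ x, F x = 0 → x = 0 := fun x hx => by
    have hx' : x.ofLp = 0 :=
      hM.eq_zero_of_tApp_eq_zero fun i => by simpa [F] using congrArg (· i) hx
    simpa using congrArg (WithLp.toLp 2) hx'
  obtain ⟨C, hC⟩ := exists_bound_of_norm_sub_le hFc hF hF0 (by omega) (WithLp.toLp 2 b) β
  refine ⟨C, fun x hx => ?_⟩
  rw [enorm2_eq_norm_toLp] at hx ⊢
  exact hC _ hx
end
end
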